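/- Rate of convergence of the dyadic Euler scheme to the Skorohod-map solution: fix T > 0, n ≥ 1, continuous f₁,…,f_n : [0,T] → ℝ with f_i(0) ≥ 0 for each i, and K ≥ 0, with initial velocity v = 0. Let (I, V) be the solution of the Skorohod system for (f, 0, K). Then for every positive integer l, sup_{t ∈ [0,T]} |I^{(2^{-l})}(t) − I(t)| ≤ ((2 + K) ‖f‖_{[0,T]} / n) · 2^{-l} · exp(K T). -/

import Mathlib

open Set MeasureTheory

/-- The Skorohod reflection term: `m_f(t) = sup_{0 ≤ s ≤ t} max(-f(s), 0)`. -/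
noncomputable def mf (f : ℝ → ℝ) (t : ℝ) : ℝ :=
  sSup ((fun s => max (-f s) 0) '' Set.Icc 0 t)

/-- `(I, V)` is a solution of the multiparticle Skorohod system for data `(f, v, K)`:
with `m_i(t) = sup_{0 ≤ s ≤ t} max(-(f_i(s) + I(s)), 0)`, one has
`V(t) = -v + (K/n) ∑ᵢ m_i(t)` and `I(t) = ∫₀ᵗ V(s) ds` on `[0,T]`. -/
def IsSkorohodSystemSol (T : ℝ) (n : ℕ) (f : Fin n → ℝ → ℝ) (v K : ℝ)
    (I V : ℝ → ℝ) : Prop :=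
  ContinuousOn I (Set.Icc 0 T) ∧ ContinuousOn V (Set.Icc 0 T) ∧
  (∀ t ∈ Set.Icc 0 T,
    V t = -v + (K / (n : ℝ)) * ∑ i, mf (fun s => f i s + I s) t) ∧
  (∀ t ∈ Set.Icc 0 T, I t = ∫ s in (0:ℝ)..t, V s)

/-- `J` is the piecewise linear Euler approximation with mesh `ε` for the data
`(f, K)` (initial velocity `v = 0`): `J ≡ 0` on `[0, ε] ∩ [0,T]`, and on each
subsequent grid interval `[Mε, (M+1)ε] ∩ [0,T]` (for `M ≥ 1`) it is linear with slope
`(K/n) ∑ᵢ sup_{0 ≤ u ≤ Mε} max(-(f_i(u) + J(u)), 0)`. -/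
def IsEulerApprox (T : ℝ) (n : ℕ) (f : Fin n → ℝ → ℝ) (K ε : ℝ)
    (J : ℝ → ℝ) : Prop :=
  (∀ t ∈ Set.Icc 0 (min ε T), J t = 0) ∧
  ∀ M : ℕ, 1 ≤ M →
    ∀ t ∈ Set.Icc ((M : ℝ) * ε) (((M : ℝ) + 1) * ε) ∩ Set.Icc (0:ℝ) T,
      J t = J ((M : ℝ) * ε) +
        (K / (n : ℝ)) *
          (∑ i, sSup ((fun u => max (-(f i u + J u)) 0) '' Set.Icc 0 ((M : ℝ) * ε))) *
          (t - (M : ℝ) * ε)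

/-!
On the grid interval `[Mε, (M+1)ε]` the Euler slope is the drift of `J` frozen at `Mε`. Since the
reflection map `g ↦ sup_{[0,t]} max(-g, 0)` is 1-Lipschitz for the sup norm, this slope differs
from `V(Mε)` by at most `K e_M`, where `e_M = sup_{[0,Mε]} |J - I|`, and since `V` is
nondecreasing, `V` varies by at most `V((M+1)ε) - V(Mε)` on the interval. This gives the discrete
Grönwall recursion `e_{M+1} ≤ (1 + Kε) e_M + ε (V((M+1)ε) - V(Mε))`, which telescopes to
`e_M ≤ (1 + Kε)^(M-1) ε V(Mε)`. Finally `(1 + Kε)^(T/ε) ≤ exp(KT)`, and `V ≤ (K/n) ‖f‖` because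
`I ≥ 0`.
-/

lemma one_add_pow_le_exp_mul {x : ℝ} (hx : 0 ≤ x) (k : ℕ) : (1 + x) ^ k ≤ Real.exp (k * x) := by
  rw [Real.exp_nat_mul]
  exact pow_le_pow_left₀ (by linarith) (by linarith [Real.add_one_le_exp x]) k

section Reflection

variable {g h : ℝ → ℝ} {s t c δ : ℝ}

lemma mf_nonneg (g : ℝ → ℝ) (t : ℝ) : 0 ≤ mf g t :=
  Real.sSup_nonneg (by rintro _ ⟨s, -, rfl⟩; exact le_max_right _ _)

lemma bddAbove_reflection_of_forall_le (hc : 0 ≤ c) (hg : ∀ s ∈ Icc 0 t, -g s ≤ c) :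
    BddAbove ((fun s => max (-g s) 0) '' Icc 0 t) :=
  ⟨c, by rintro _ ⟨s, hs, rfl⟩; exact max_le (hg s hs) hc⟩

lemma bddAbove_reflection_of_continuousOn {T : ℝ} (hg : ContinuousOn g (Icc 0 T)) (ht : t ≤ T) :
    BddAbove ((fun s => max (-g s) 0) '' Icc 0 t) :=
  (isCompact_Icc.image_of_continuousOn
    ((hg.neg.sup continuousOn_const).mono (Icc_subset_Icc_right ht))).bddAbove

lemma mf_le_of_forall_le (hc : 0 ≤ c) (hg : ∀ s ∈ Icc 0 t, -g s ≤ c) : mf g t ≤ c :=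
  Real.sSup_le (by rintro _ ⟨s, hs, rfl⟩; exact max_le (hg s hs) hc) hc

lemma neg_le_mf (hbdd : BddAbove ((fun s => max (-g s) 0) '' Icc 0 t)) (hs : s ∈ Icc 0 t) :
    -g s ≤ mf g t :=
  (le_max_left _ _).trans (le_csSup hbdd (mem_image_of_mem _ hs))

lemma mf_mono (hbdd : BddAbove ((fun s => max (-g s) 0) '' Icc 0 t)) (hs : 0 ≤ s) (hst : s ≤ t) :
    mf g s ≤ mf g t :=
  csSup_le_csSup hbdd ((nonempty_Icc.mpr hs).image _) (image_mono (Icc_subset_Icc_right hst))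

lemma abs_mf_sub_mf_le (hbdd : BddAbove ((fun s => max (-h s) 0) '' Icc 0 t)) (ht : 0 ≤ t)
    (hgh : ∀ s ∈ Icc 0 t, |g s - h s| ≤ δ) : |mf g t - mf h t| ≤ δ := by
  have hδ : 0 ≤ δ := (abs_nonneg _).trans (hgh 0 ⟨le_rfl, ht⟩)
  have hg_le : ∀ s ∈ Icc 0 t, -g s ≤ mf h t + δ := fun s hs => by
    linarith [neg_le_mf hbdd hs, (abs_le.mp (hgh s hs)).1]
  have hbdd' := bddAbove_reflection_of_forall_le (by linarith [mf_nonneg h t]) hg_le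
  rw [abs_sub_le_iff]
  constructor
  · linarith [mf_le_of_forall_le (by linarith [mf_nonneg h t]) hg_le]
  · have hh_le : ∀ s ∈ Icc 0 t, -h s ≤ mf g t + δ := fun s hs => by
      linarith [neg_le_mf hbdd' hs, (abs_le.mp (hgh s hs)).2]
    linarith [mf_le_of_forall_le (by linarith [mf_nonneg g t]) hh_le]

end Reflection

section Drift

variable {n : ℕ} {f : Fin n → ℝ → ℝ} {K : ℝ} {I J : ℝ → ℝ} {s t δ : ℝ}

/-- `(K/n) ∑ᵢ mᵢ(t)` for the path `I`: the velocity of the Skorohod system when `I` is its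
solution, and the slope of the Euler scheme on `[t, t + ε]` when `I` is the scheme and `t = Mε`. -/
noncomputable def skorohodDrift (n : ℕ) (f : Fin n → ℝ → ℝ) (K : ℝ) (I : ℝ → ℝ) (t : ℝ) : ℝ :=
  K / n * ∑ i, mf (fun s => f i s + I s) t

lemma skorohodDrift_nonneg (hK : 0 ≤ K) : 0 ≤ skorohodDrift n f K I t :=
  mul_nonneg (by positivity) (Finset.sum_nonneg fun i _ => mf_nonneg _ _)

lemma skorohodDrift_mono (hK : 0 ≤ K)
    (hbdd : ∀ i, BddAbove ((fun u => max (-(f i u + I u)) 0) '' Icc 0 t))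
    (hs : 0 ≤ s) (hst : s ≤ t) : skorohodDrift n f K I s ≤ skorohodDrift n f K I t :=
  mul_le_mul_of_nonneg_left (Finset.sum_le_sum fun i _ => mf_mono (hbdd i) hs hst) (by positivity)

lemma abs_skorohodDrift_sub_le (hK : 0 ≤ K)
    (hbdd : ∀ i, BddAbove ((fun u => max (-(f i u + I u)) 0) '' Icc 0 t)) (ht : 0 ≤ t)
    (hJI : ∀ s ∈ Icc 0 t, |J s - I s| ≤ δ) :
    |skorohodDrift n f K J t - skorohodDrift n f K I t| ≤ K * δ := by
  have hδ : 0 ≤ δ := (abs_nonneg _).trans (hJI 0 ⟨le_rfl, ht⟩)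
  have hsum : |∑ i, (mf (fun s => f i s + J s) t - mf (fun s => f i s + I s) t)| ≤ n * δ :=
    calc _ ≤ ∑ i, |mf (fun s => f i s + J s) t - mf (fun s => f i s + I s) t| :=
          Finset.abs_sum_le_sum_abs _ _
      _ ≤ ∑ _i : Fin n, δ := Finset.sum_le_sum fun i _ => abs_mf_sub_mf_le (hbdd i) ht
          fun s hs => by rw [add_sub_add_left_eq_sub]; exact hJI s hs
      _ = n * δ := by simp
  calc |skorohodDrift n f K J t - skorohodDrift n f K I t|
      = K / n * |∑ i, (mf (fun s => f i s + J s) t - mf (fun s => f i s + I s) t)| := by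
        rw [skorohodDrift, skorohodDrift, ← mul_sub, ← Finset.sum_sub_distrib, abs_mul,
          abs_of_nonneg (by positivity)]
    _ ≤ K / n * (n * δ) := by gcongr
    _ ≤ K * δ := by
        rcases eq_or_ne (n : ℝ) 0 with hn | hn
        · simp only [hn, div_zero, zero_mul]; positivity
        · rw [← mul_assoc, div_mul_cancel₀ K hn]

end Drift

namespace IsSkorohodSystemSol

variable {T K : ℝ} {n : ℕ} {f : Fin n → ℝ → ℝ} {I V : ℝ → ℝ} {a b s t : ℝ}
  (hsol : IsSkorohodSystemSol T n f 0 K I V)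
include hsol

lemma V_eq_skorohodDrift (ht : t ∈ Icc 0 T) : V t = skorohodDrift n f K I t := by
  rw [hsol.2.2.1 t ht, neg_zero, zero_add, skorohodDrift]

lemma bddAbove_reflection (hf : ∀ i, ContinuousOn (f i) (Icc 0 T)) (ht : t ≤ T) (i : Fin n) :
    BddAbove ((fun u => max (-(f i u + I u)) 0) '' Icc 0 t) :=
  bddAbove_reflection_of_continuousOn ((hf i).add hsol.1) ht

lemma V_nonneg (hK : 0 ≤ K) (ht : t ∈ Icc 0 T) : 0 ≤ V t :=
  (hsol.V_eq_skorohodDrift ht).symm ▸ skorohodDrift_nonneg hK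

lemma V_mono (hK : 0 ≤ K) (hf : ∀ i, ContinuousOn (f i) (Icc 0 T)) (hs : 0 ≤ s) (hst : s ≤ t)
    (htT : t ≤ T) : V s ≤ V t := by
  rw [hsol.V_eq_skorohodDrift ⟨hs, hst.trans htT⟩, hsol.V_eq_skorohodDrift ⟨hs.trans hst, htT⟩]
  exact skorohodDrift_mono hK (hsol.bddAbove_reflection hf htT) hs hst

lemma intervalIntegrable_V (ha : 0 ≤ a) (hab : a ≤ b) (hbT : b ≤ T) :
    IntervalIntegrable V volume a b :=
  (hsol.2.1.mono (by rw [uIcc_of_le hab]; exact Icc_subset_Icc ha hbT)).intervalIntegrable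

lemma I_sub_eq_integral (ha : 0 ≤ a) (hab : a ≤ b) (hbT : b ≤ T) :
    I b - I a = ∫ s in a..b, V s := by
  rw [hsol.2.2.2 b ⟨ha.trans hab, hbT⟩, hsol.2.2.2 a ⟨ha, hab.trans hbT⟩,
    intervalIntegral.integral_interval_sub_left (hsol.intervalIntegrable_V le_rfl (ha.trans hab) hbT)
      (hsol.intervalIntegrable_V le_rfl ha (hab.trans hbT))]

lemma I_zero (hT : 0 ≤ T) : I 0 = 0 := by
  rw [hsol.2.2.2 0 ⟨le_rfl, hT⟩, intervalIntegral.integral_same]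

lemma I_nonneg (hK : 0 ≤ K) (ht : t ∈ Icc 0 T) : 0 ≤ I t := by
  rw [hsol.2.2.2 t ht]
  exact intervalIntegral.integral_nonneg ht.1 fun s hs => hsol.V_nonneg hK ⟨hs.1, hs.2.trans ht.2⟩

lemma I_sub_le (hK : 0 ≤ K) (hf : ∀ i, ContinuousOn (f i) (Icc 0 T)) (ha : 0 ≤ a) (hab : a ≤ b)
    (hbT : b ≤ T) : I b - I a ≤ (b - a) * V b := by
  rw [hsol.I_sub_eq_integral ha hab hbT]
  calc ∫ s in a..b, V s ≤ ∫ _ in a..b, V b :=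
        intervalIntegral.integral_mono_on hab (hsol.intervalIntegrable_V ha hab hbT)
          intervalIntegrable_const fun s hs => hsol.V_mono hK hf (ha.trans hs.1) hs.2 hbT
    _ = (b - a) * V b := by rw [intervalIntegral.integral_const, smul_eq_mul]

lemma V_le_sum_sSup_abs (hK : 0 ≤ K) (hT : 0 ≤ T) (hf : ∀ i, ContinuousOn (f i) (Icc 0 T)) :
    V T ≤ K / n * ∑ i, sSup ((fun t => |f i t|) '' Icc 0 T) := by
  rw [hsol.V_eq_skorohodDrift ⟨hT, le_rfl⟩]
  refine mul_le_mul_of_nonneg_left (Finset.sum_le_sum fun i _ => ?_) (by positivity)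
  have hbdd := (isCompact_Icc.image_of_continuousOn (hf i).abs).bddAbove
  have habs_le : ∀ s ∈ Icc 0 T, |f i s| ≤ sSup ((fun t => |f i t|) '' Icc 0 T) :=
    fun s hs => le_csSup hbdd (mem_image_of_mem _ hs)
  refine mf_le_of_forall_le ((abs_nonneg _).trans (habs_le 0 ⟨le_rfl, hT⟩)) fun s hs => ?_
  linarith [neg_le_abs (f i s), habs_le s hs, hsol.I_nonneg hK hs]

end IsSkorohodSystemSol

section EulerError

variable {T K ε : ℝ} {n : ℕ} {f : Fin n → ℝ → ℝ} {J I V : ℝ → ℝ}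

theorem abs_euler_sub_le_of_step (hJ : IsEulerApprox T n f K ε J)
    (hsol : IsSkorohodSystemSol T n f 0 K I V) (hf : ∀ i, ContinuousOn (f i) (Icc 0 T))
    (hK : 0 ≤ K) (hε : 0 ≤ ε) {M : ℕ} (hM : 1 ≤ M) (hMT : M * ε ≤ T) {B : ℝ}
    (hB : ∀ u ∈ Icc 0 (M * ε), |J u - I u| ≤ B) {t : ℝ}
    (ht : t ∈ Icc (M * ε) (min ((M + 1) * ε) T)) :
    |J t - I t| ≤ (1 + K * ε) * B + ε * (V (min ((M + 1) * ε) T) - V (M * ε)) := by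
  set a := (M : ℝ) * ε
  set b := min (((M : ℝ) + 1) * ε) T
  have ha : 0 ≤ a := by positivity
  have htb : t ≤ b := ht.2
  have hbT : b ≤ T := min_le_right _ _
  have htT : t ≤ T := htb.trans hbT
  have hta : t - a ≤ ε := by linarith [min_le_left (((M : ℝ) + 1) * ε) T]
  have hJt : J t = J a + skorohodDrift n f K J a * (t - a) :=
    hJ.2 M hM t ⟨⟨ht.1, htb.trans (min_le_left _ _)⟩, ⟨ha.trans ht.1, htT⟩⟩
  have hdrift : |skorohodDrift n f K J a - V a| ≤ K * B := by
    rw [hsol.V_eq_skorohodDrift ⟨ha, hMT⟩]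
    exact abs_skorohodDrift_sub_le hK (hsol.bddAbove_reflection hf hMT) ha hB
  have hintegrand : ∀ s ∈ uIoc a t, ‖skorohodDrift n f K J a - V s‖ ≤ K * B + (V b - V a) := by
    intro s hs
    rw [uIoc_of_le ht.1] at hs
    have hVas : V a ≤ V s := hsol.V_mono hK hf ha hs.1.le (hs.2.trans htT)
    have hVsb : V s ≤ V b := hsol.V_mono hK hf (ha.trans hs.1.le) (hs.2.trans htb) hbT
    calc ‖skorohodDrift n f K J a - V s‖
        ≤ |skorohodDrift n f K J a - V a| + |V a - V s| := abs_sub_le _ _ _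
      _ ≤ K * B + (V b - V a) := by
          rw [abs_sub_comm (V a), abs_of_nonneg (sub_nonneg.mpr hVas)]
          linarith
  have hB0 : 0 ≤ B := (abs_nonneg _).trans (hB 0 ⟨le_rfl, ha⟩)
  have hVab : V a ≤ V b := hsol.V_mono hK hf ha (ht.1.trans htb) hbT
  have hint : |∫ s in a..t, (skorohodDrift n f K J a - V s)| ≤ (K * B + (V b - V a)) * ε := by
    calc |∫ s in a..t, (skorohodDrift n f K J a - V s)| ≤ (K * B + (V b - V a)) * |t - a| :=
          intervalIntegral.norm_integral_le_of_norm_le_const hintegrand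
      _ ≤ (K * B + (V b - V a)) * ε := by
          rw [abs_of_nonneg (sub_nonneg.mpr ht.1)]
          exact mul_le_mul_of_nonneg_left hta (by linarith [mul_nonneg hK hB0])
  have hsplit : J t - I t = (J a - I a) + ∫ s in a..t, (skorohodDrift n f K J a - V s) := by
    rw [intervalIntegral.integral_sub intervalIntegrable_const
      (hsol.intervalIntegrable_V ha ht.1 htT), intervalIntegral.integral_const, smul_eq_mul,
      ← hsol.I_sub_eq_integral ha ht.1 htT, hJt]
    ring
  calc |J t - I t| ≤ |J a - I a| + |∫ s in a..t, (skorohodDrift n f K J a - V s)| := by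
        rw [hsplit]; exact abs_add_le _ _
    _ ≤ B + (K * B + (V b - V a)) * ε := add_le_add (hB a ⟨ha, le_rfl⟩) hint
    _ = (1 + K * ε) * B + ε * (V b - V a) := by ring

theorem abs_euler_sub_le (hJ : IsEulerApprox T n f K ε J)
    (hsol : IsSkorohodSystemSol T n f 0 K I V) (hf : ∀ i, ContinuousOn (f i) (Icc 0 T))
    (hK : 0 ≤ K) (hε : 0 ≤ ε) {M : ℕ} (hM : 1 ≤ M) :
    ∀ t ∈ Icc 0 (min (M * ε) T),
      |J t - I t| ≤ (1 + K * ε) ^ (M - 1) * ε * V (min (M * ε) T) := by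
  have hKε : 1 ≤ 1 + K * ε := by nlinarith
  induction M, hM using Nat.le_induction with
  | base =>
    intro t ht
    simp only [Nat.cast_one, one_mul, Nat.sub_self, pow_zero] at ht ⊢
    have htT : t ∈ Icc 0 T := ⟨ht.1, ht.2.trans (min_le_right _ _)⟩
    rw [hJ.1 t ht, zero_sub, abs_neg, abs_of_nonneg (hsol.I_nonneg hK htT)]
    calc I t = I t - I 0 := by rw [hsol.I_zero (ht.1.trans htT.2), sub_zero]
      _ ≤ (t - 0) * V t := hsol.I_sub_le hK hf le_rfl ht.1 htT.2
      _ ≤ ε * V (min ε T) := mul_le_mul (by linarith [ht.2, min_le_left ε T])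
          (hsol.V_mono hK hf ht.1 ht.2 (min_le_right _ _)) (hsol.V_nonneg hK htT) hε
  | succ M hM ih =>
    intro t ht
    push_cast at ht ⊢
    have hpow : (1 + K * ε) ^ (M - 1) ≤ (1 + K * ε) ^ M := pow_le_pow_right₀ hKε (Nat.sub_le M 1)
    set b := min (((M : ℝ) + 1) * ε) T
    have hbT : b ≤ T := min_le_right _ _
    rcases le_or_gt T (M * ε) with hTM | hMT
    · have hb : b = T := min_eq_right (hTM.trans (by nlinarith))
      rw [min_eq_right hTM] at ih
      rw [hb] at ht ⊢
      calc |J t - I t| ≤ (1 + K * ε) ^ (M - 1) * ε * V T := ih t ht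
        _ ≤ (1 + K * ε) ^ M * ε * V T := by
            gcongr
            exact hsol.V_nonneg hK ⟨ht.1.trans ht.2, le_rfl⟩
    rw [min_eq_left hMT.le] at ih
    have hMε : 0 ≤ (M : ℝ) * ε := by positivity
    have hMb : (M : ℝ) * ε ≤ b := le_min (by nlinarith) hMT.le
    have hVMb : V (M * ε) ≤ V b := hsol.V_mono hK hf hMε hMb hbT
    have hVM : 0 ≤ V (M * ε) := hsol.V_nonneg hK ⟨hMε, hMT.le⟩
    rcases le_or_gt t (M * ε) with htM | htM
    · calc |J t - I t| ≤ (1 + K * ε) ^ (M - 1) * ε * V (M * ε) := ih t ⟨ht.1, htM⟩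
        _ ≤ (1 + K * ε) ^ M * ε * V b := by gcongr
    calc |J t - I t|
        ≤ (1 + K * ε) * ((1 + K * ε) ^ (M - 1) * ε * V (M * ε)) + ε * (V b - V (M * ε)) :=
          abs_euler_sub_le_of_step hJ hsol hf hK hε hM hMT.le ih ⟨htM.le, ht.2⟩
      _ = (1 + K * ε) ^ M * ε * V (M * ε) + ε * (V b - V (M * ε)) := by
          rw [← mul_assoc, ← mul_assoc, ← pow_succ', Nat.sub_add_cancel hM]
      _ ≤ (1 + K * ε) ^ M * ε * V b := by
          nlinarith [one_le_pow₀ (n := M) hKε, mul_nonneg hε (sub_nonneg.mpr hVMb)]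

end EulerError

theorem stmt_15_general (T : ℝ) (hT : 0 < T) (n : ℕ)
    (f : Fin n → ℝ → ℝ) (hf : ∀ i, ContinuousOn (f i) (Set.Icc 0 T))
    (K : ℝ) (hK : 0 ≤ K)
    (l : ℕ)
    (Jl : ℝ → ℝ) (hJl : IsEulerApprox T n f K ((2 : ℝ) ^ (-(l : ℤ))) Jl)
    (I V : ℝ → ℝ) (hsol : IsSkorohodSystemSol T n f 0 K I V) :
    sSup ((fun t => |Jl t - I t|) '' Set.Icc 0 T) ≤
      ((2 + K) * (∑ i, sSup ((fun t => |f i t|) '' Set.Icc 0 T)) / (n : ℝ)) *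
        (2 : ℝ) ^ (-(l : ℤ)) * Real.exp (K * T) := by
  set ε : ℝ := (2 : ℝ) ^ (-(l : ℤ))
  set F : ℝ := ∑ i, sSup ((fun t => |f i t|) '' Set.Icc 0 T)
  have hε : 0 < ε := by positivity
  have hF : 0 ≤ F := Finset.sum_nonneg fun i _ =>
    Real.sSup_nonneg (by rintro _ ⟨t, -, rfl⟩; exact abs_nonneg _)
  set N := ⌈T / ε⌉₊
  have hN : 1 ≤ N := Nat.ceil_pos.mpr (div_pos hT hε)
  have hTN : T ≤ N * ε := (div_le_iff₀ hε).mp (Nat.le_ceil _)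
  have hNT : ((N - 1 : ℕ) : ℝ) * ε ≤ T :=
    ((lt_div_iff₀ hε).mp (Nat.lt_ceil.mp (Nat.sub_lt hN one_pos))).le
  have herr := abs_euler_sub_le hJl hsol hf hK hε.le hN
  rw [min_eq_right hTN] at herr
  have hpow : (1 + K * ε) ^ (N - 1) ≤ Real.exp (K * T) :=
    (one_add_pow_le_exp_mul (by positivity) _).trans (Real.exp_le_exp.mpr (by nlinarith))
  have hVT := hsol.V_le_sum_sSup_abs hK hT.le hf
  refine Real.sSup_le (fun _ ⟨t, ht, hx⟩ => hx ▸ ?_) (by positivity)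
  calc |Jl t - I t| ≤ (1 + K * ε) ^ (N - 1) * ε * V T := herr t ht
    _ ≤ Real.exp (K * T) * ε * (K / n * F) := by
        gcongr
        exact hsol.V_nonneg hK ⟨hT.le, le_rfl⟩
    _ ≤ (2 + K) * F / n * ε * Real.exp (K * T) := by
        rw [mul_comm (Real.exp _), mul_comm, ← mul_assoc, div_mul_eq_mul_div]
        gcongr
        linarith

/-- Rate of convergence of the dyadic Euler scheme to the Skorohod-map solution:
`sup_{t ∈ [0,T]} |I^{(2^{-l})}(t) - I(t)| ≤ ((2 + K) ‖f‖_{[0,T]} / n) 2^{-l} exp(KT)`. -/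
theorem stmt_15 (T : ℝ) (hT : 0 < T) (n : ℕ) (hn : 1 ≤ n)
    (f : Fin n → ℝ → ℝ) (hf : ∀ i, ContinuousOn (f i) (Set.Icc 0 T))
    (hf0 : ∀ i, 0 ≤ f i 0) (K : ℝ) (hK : 0 ≤ K)
    (l : ℕ) (hl : 1 ≤ l)
    (Jl : ℝ → ℝ) (hJl : IsEulerApprox T n f K ((2 : ℝ) ^ (-(l : ℤ))) Jl)
    (I V : ℝ → ℝ) (hsol : IsSkorohodSystemSol T n f 0 K I V) :
    sSup ((fun t => |Jl t - I t|) '' Set.Icc 0 T) ≤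
      ((2 + K) * (∑ i, sSup ((fun t => |f i t|) '' Set.Icc 0 T)) / (n : ℝ)) *
        (2 : ℝ) ^ (-(l : ℤ)) * Real.exp (K * T) :=
  stmt_15_general T hT n f hf K hK l Jl hJl I V hsol
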